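/- Let G = (V,E) be a distributed computing network and let s,t ∈ V. In the layered graph of G, assign to each of the two copies (u,v) and (u',v') of a link the cost μ_{uv}, and to each crossing edge (w,w') the cost μ_w. Let C be a minimum-cost set of edges of the layered graph whose removal disconnects s from t'. Then the pair (E_c, V_c) with E_c = {(u,v) ∈ E : (u,v) ∈ C or (u',v') ∈ C} and V_c = {w ∈ V : (w,w') ∈ C} is a joint communication and computation cut for (s,t), and its value Σ_{(u,v)∈E_c} μ_{uv} + Σ_{w∈V_c} μ_w is at most twice the minimum value over all joint communication and computation cuts for (s,t). -/

import Mathlib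

open Finset

variable {V : Type} [Fintype V] [DecidableEq V]

/-- A computation path from `s` to `t` in the directed graph with link set `E`:
a directed walk (a nonempty list of nodes whose consecutive pairs are links of `E`)
starting at `s` and ending at `t`, together with a designated processing node `proc`
lying on the walk. -/
structure CompPath (E : Finset (V × V)) (s t : V) : Type where
  walk : List V
  proc : V
  walk_ne : walk ≠ []
  head_eq : walk.head? = some s
  last_eq : walk.getLast? = some t
  chain : walk.Chain' fun u v => (u, v) ∈ E
  proc_mem : proc ∈ walk

namespace CompPath

/-- The list of links traversed by a computation path, with multiplicity. -/
def links {E : Finset (V × V)} {s t : V} (p : CompPath E s t) : List (V × V) :=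
  p.walk.zip p.walk.tail

end CompPath

/-- `x` is a feasible `s`–`t` flow in the computing network `(E, μE, μV)`:
a nonnegative, finitely supported assignment of values to computation paths such that
every link `e ∈ E` carries (with multiplicity) at most `μE e` total flow and every node
`w` processes at most `μV w` total flow. -/
def IsFlow (E : Finset (V × V)) (μE : V × V → ℝ) (μV : V → ℝ) (s t : V)
    (x : CompPath E s t →₀ ℝ) : Prop :=
  (∀ p, 0 ≤ x p) ∧
  (∀ e ∈ E, ∑ p ∈ x.support, x p * (p.links.count e : ℝ) ≤ μE e) ∧
  (∀ w : V, ∑ p ∈ x.support, (if p.proc = w then x p else 0) ≤ μV w)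

/-- The total value of a flow. -/
def flowValue (E : Finset (V × V)) (s t : V) (x : CompPath E s t →₀ ℝ) : ℝ :=
  ∑ p ∈ x.support, x p

/-- The maximum `s`–`t` flow of the computing network `(E, μE, μV)`. -/
noncomputable def maxFlow (E : Finset (V × V)) (μE : V × V → ℝ) (μV : V → ℝ)
    (s t : V) : ℝ :=
  sSup {F | ∃ x, IsFlow E μE μV s t x ∧ F = flowValue E s t x}

/-- A communication cut for `(s, t)`: a set of links `Ec ⊆ E` such that every
computation path from `s` to `t` whose processing node has positive processing
capacity uses some link of `Ec`. -/
def IsCommCut (E : Finset (V × V)) (μV : V → ℝ) (s t : V) (Ec : Finset (V × V)) : Prop :=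
  Ec ⊆ E ∧ ∀ p : CompPath E s t, 0 < μV p.proc → ∃ e ∈ Ec, e ∈ p.links

/-- A computation cut for `(s, t)`: a set of nodes `Vc` such that every computation
path from `s` to `t` whose processing node has positive processing capacity has its
processing node in `Vc`. -/
def IsCompCut (E : Finset (V × V)) (μV : V → ℝ) (s t : V) (Vc : Finset V) : Prop :=
  ∀ p : CompPath E s t, 0 < μV p.proc → p.proc ∈ Vc

/-- A joint communication and computation cut for `(s, t)`. -/
def IsJointCut (E : Finset (V × V)) (μV : V → ℝ) (s t : V)
    (Ec : Finset (V × V)) (Vc : Finset V) : Prop :=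
  Ec ⊆ E ∧
    ∀ p : CompPath E s t, 0 < μV p.proc → (∃ e ∈ Ec, e ∈ p.links) ∨ p.proc ∈ Vc

/-- The value of a joint cut. -/
def jointCutValue (μE : V × V → ℝ) (μV : V → ℝ) (Ec : Finset (V × V)) (Vc : Finset V) : ℝ :=
  ∑ e ∈ Ec, μE e + ∑ w ∈ Vc, μV w

/-- The minimum value of a joint communication and computation cut for `(s, t)`. -/
noncomputable def minJointCutValue (E : Finset (V × V)) (μE : V × V → ℝ) (μV : V → ℝ)
    (s t : V) : ℝ :=
  sInf {c | ∃ Ec Vc, IsJointCut E μV s t Ec Vc ∧ c = jointCutValue μE μV Ec Vc}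

/-- The edge set of the layered graph of `(V, E)`: a copy of each link in each of the
two layers (`Sum.inl` is the upper layer, `Sum.inr` the lower layer), plus a crossing
edge `(w, w')` for each node `w`. -/
def layerEdges (E : Finset (V × V)) : Finset ((V ⊕ V) × (V ⊕ V)) :=
  (E.image fun e => (Sum.inl e.1, Sum.inl e.2)) ∪
    (E.image fun e => (Sum.inr e.1, Sum.inr e.2)) ∪
    ((univ : Finset V).image fun w => (Sum.inl w, Sum.inr w))

/-- `a` is connected to `b` by a directed path in the layered graph after deleting
the edge set `C`. -/
def LConnected (E : Finset (V × V)) (C : Finset ((V ⊕ V) × (V ⊕ V))) (a b : V ⊕ V) : Prop :=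
  Relation.ReflTransGen (fun u v => (u, v) ∈ layerEdges E \ C) a b

/-- Costs (capacities) of layered-graph edges: each of the two copies of a link
`(u, v)` gets cost `μE (u, v)`, and the crossing edge `(w, w')` gets cost `κ w`. -/
def lcost (μE : V × V → ℝ) (κ : V → ℝ) : (V ⊕ V) × (V ⊕ V) → ℝ
  | (Sum.inl u, Sum.inl v) => μE (u, v)
  | (Sum.inr u, Sum.inr v) => μE (u, v)
  | (Sum.inl u, Sum.inr v) => if u = v then κ u else 0
  | (Sum.inr _, Sum.inl _) => 0

/-- Reachability along directed links of `E`. -/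
def Reach (E : Finset (V × V)) (a b : V) : Prop :=
  Relation.ReflTransGen (fun u v => (u, v) ∈ E) a b

/-!
A path from `s` to `t'` in the layered graph runs in the upper layer from `s` to some `w`,
crosses by `(w, w')` and runs in the lower layer to `t'`: it is a computation path processed
at `w`. So a layered cut `C` projects to a joint cut (the links with a copy in `C`, the nodes
whose crossing edge is in `C`) of value at most the cost of `C`. Conversely a joint cut
`(E_c, V_c)` lifts to the layered cut made of both copies of the links of `E_c` and the
crossing edges of `V_c` and of the nodes of capacity zero (which cost nothing, and through
which a joint cut need not cut the computation paths); its cost is at most twice the value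
of `(E_c, V_c)`. Minimality of `C` gives the factor `2`.
-/

open Relation

namespace List

variable {α : Type*} {r : α → α → Prop}

theorem isChain_iff_forall_mem_zip_tail {l : List α} :
    IsChain r l ↔ ∀ e ∈ l.zip l.tail, r e.1 e.2 := by
  induction l using twoStepInduction <;> simp_all

theorem IsChain.reflTransGen_of_head?_eq {l : List α} {a x : α} (hl : IsChain r l)
    (ha : l.head? = some a) (hx : x ∈ l) : ReflTransGen r a x := by
  obtain ⟨l, rfl⟩ := head?_eq_some_iff.mp ha
  exact hl.induction (ReflTransGen r a ·) _ (fun _ _ hyz hy => hy.tail hyz)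
    (fun _ => .refl) x hx

theorem IsChain.reflTransGen_of_getLast?_eq {l : List α} {b x : α} (hl : IsChain r l)
    (hb : l.getLast? = some b) (hx : x ∈ l) : ReflTransGen r x b :=
  hl.backwards_induction (ReflTransGen r · b) _ (fun _ _ hyz hz => hz.head hyz)
    (fun hne => by rw [getLast?_eq_some_getLast hne] at hb; cases hb; exact .refl) x hx

theorem exists_isChain_of_reflTransGen_of_reflTransGen {a b c : α}
    (hab : ReflTransGen r a b) (hbc : ReflTransGen r b c) :
    ∃ l, IsChain r l ∧ l.head? = some a ∧ l.getLast? = some c ∧ b ∈ l := by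
  induction hab using ReflTransGen.head_induction_on with
  | refl =>
    obtain ⟨l, hl, hlast⟩ := exists_isChain_cons_of_relationReflTransGen hbc
    refine ⟨b :: l, hl, rfl, ?_, mem_cons_self⟩
    rw [getLast?_eq_some_getLast (cons_ne_nil _ _), hlast]
  | head had _ ih =>
    obtain ⟨l, hl, hhead, hlast, hb⟩ := ih
    obtain ⟨l, rfl⟩ := head?_eq_some_iff.mp hhead
    exact ⟨_ :: _ :: l, hl.cons_cons had, rfl, by simpa using hlast, mem_cons_of_mem _ hb⟩

end List

theorem Relation.reflTransGen_inl_inr_iff {α β : Type*} {r : α ⊕ β → α ⊕ β → Prop}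
    (hr : ∀ b a, ¬ r (.inr b) (.inl a)) {a : α} {b : β} :
    ReflTransGen r (.inl a) (.inr b) ↔
      ∃ a' b', ReflTransGen (fun x y => r (.inl x) (.inl y)) a a' ∧ r (.inl a') (.inr b') ∧
        ReflTransGen (fun x y => r (.inr x) (.inr y)) b' b := by
  constructor
  · suffices ∀ z, ReflTransGen r (.inl a) z →
        z.elim (ReflTransGen (fun x y => r (.inl x) (.inl y)) a) fun b =>
          ∃ a' b', ReflTransGen (fun x y => r (.inl x) (.inl y)) a a' ∧
            r (.inl a') (.inr b') ∧ ReflTransGen (fun x y => r (.inr x) (.inr y)) b' b from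
      this _
    intro z hz
    induction hz with
    | refl => exact .refl
    | @tail y z _ hyz ih =>
      rcases y with y | y <;> rcases z with z | z
      · exact ReflTransGen.tail ih hyz
      · exact ⟨y, z, ih, hyz, .refl⟩
      · exact absurd hyz (hr _ _)
      · obtain ⟨a', b', ha, hab, hb⟩ := ih
        exact ⟨a', b', ha, hab, hb.tail hyz⟩
  · rintro ⟨a', b', ha, hab, hb⟩
    exact (ha.lift _ fun _ _ => id).trans <|
      ReflTransGen.head hab (hb.lift _ fun _ _ => id)

namespace CompPath

variable {E F : Finset (V × V)} {s t w : V}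

omit [Fintype V] in
theorem isChain_sdiff (p : CompPath E s t) (hF : ∀ e ∈ p.links, e ∉ F) :
    p.walk.IsChain fun u v => (u, v) ∈ E \ F := by
  have hE : p.walk.IsChain fun u v => (u, v) ∈ E := p.chain
  rw [List.isChain_iff_forall_mem_zip_tail] at hE ⊢
  exact fun e he => mem_sdiff.mpr ⟨hE e he, hF e he⟩

omit [Fintype V] in
theorem exists_avoiding_iff_reach :
    (∃ p : CompPath E s t, p.proc = w ∧ ∀ e ∈ p.links, e ∉ F) ↔
      Reach (E \ F) s w ∧ Reach (E \ F) w t := by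
  constructor
  · rintro ⟨p, rfl, hF⟩
    have hchain := p.isChain_sdiff hF
    exact ⟨hchain.reflTransGen_of_head?_eq p.head_eq p.proc_mem,
      hchain.reflTransGen_of_getLast?_eq p.last_eq p.proc_mem⟩
  · rintro ⟨hs, ht⟩
    obtain ⟨l, hl, hhead, hlast, hw⟩ := List.exists_isChain_of_reflTransGen_of_reflTransGen hs ht
    refine ⟨⟨l, w, by rintro rfl; simp at hhead, hhead, hlast,
      hl.imp fun _ _ h => (mem_sdiff.mp h).1, hw⟩, rfl, ?_⟩
    intro e he
    exact (mem_sdiff.mp (List.isChain_iff_forall_mem_zip_tail.mp hl e he)).2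

end CompPath

section LayeredGraph

variable {E : Finset (V × V)} {C : Finset ((V ⊕ V) × (V ⊕ V))}

@[simp]
theorem inl_inl_mem_layerEdges {u v : V} : (.inl u, .inl v) ∈ layerEdges E ↔ (u, v) ∈ E := by
  simp [layerEdges]

@[simp]
theorem inr_inr_mem_layerEdges {u v : V} : (.inr u, .inr v) ∈ layerEdges E ↔ (u, v) ∈ E := by
  simp [layerEdges]

@[simp]
theorem inl_inr_mem_layerEdges {u v : V} : (.inl u, .inr v) ∈ layerEdges E ↔ u = v := by
  simp [layerEdges, eq_comm]

@[simp]
theorem inr_inl_notMem_layerEdges {u v : V} : (.inr u, .inl v) ∉ layerEdges E := by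
  simp [layerEdges]

theorem lConnected_inl_inr_iff {s t : V} :
    LConnected E C (.inl s) (.inr t) ↔
      ∃ w, Reach (E.filter fun e => (.inl e.1, .inl e.2) ∉ C) s w ∧ (.inl w, .inr w) ∉ C ∧
        Reach (E.filter fun e => (.inr e.1, .inr e.2) ∉ C) w t := by
  rw [LConnected, Relation.reflTransGen_inl_inr_iff (by simp)]
  simp [Reach]

end LayeredGraph

def layerCutLinks (E : Finset (V × V)) (C : Finset ((V ⊕ V) × (V ⊕ V))) : Finset (V × V) :=
  E.filter fun e => (.inl e.1, .inl e.2) ∈ C ∨ (.inr e.1, .inr e.2) ∈ C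

def layerCutNodes (C : Finset ((V ⊕ V) × (V ⊕ V))) : Finset V :=
  univ.filter fun w => (.inl w, .inr w) ∈ C

def liftCut (Ec : Finset (V × V)) (Vc : Finset V) : Finset ((V ⊕ V) × (V ⊕ V)) :=
  Ec.image (Prod.map .inl .inl) ∪ Ec.image (Prod.map .inr .inr) ∪
    Vc.image fun w => (.inl w, .inr w)

section Cuts

variable {E Ec : Finset (V × V)} {Vc : Finset V} {C : Finset ((V ⊕ V) × (V ⊕ V))}
  {μE : V × V → ℝ} {μV : V → ℝ} {s t : V}

theorem isJointCut_layerCut (hC : ¬ LConnected E C (.inl s) (.inr t)) :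
    IsJointCut E μV s t (layerCutLinks E C) (layerCutNodes C) := by
  refine ⟨filter_subset _ _, fun p _ => ?_⟩
  by_contra! hp
  obtain ⟨hs, ht⟩ := CompPath.exists_avoiding_iff_reach.mp ⟨p, rfl, fun e he hc => hp.1 e hc he⟩
  refine hC (lConnected_inl_inr_iff.mpr ⟨p.proc, ReflTransGen.mono ?_ _ _ hs,
    by simpa [layerCutNodes] using hp.2, ReflTransGen.mono ?_ _ _ ht⟩) <;>
    exact fun _ _ h => by simp_all [layerCutLinks]

theorem not_lConnected_liftCut
    (h : ∀ p : CompPath E s t, (∃ e ∈ Ec, e ∈ p.links) ∨ p.proc ∈ Vc) :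
    ¬ LConnected E (liftCut Ec Vc) (.inl s) (.inr t) := by
  intro hconn
  obtain ⟨w, hs, hw, ht⟩ := lConnected_inl_inr_iff.mp hconn
  obtain ⟨p, hpw, hp⟩ := (CompPath.exists_avoiding_iff_reach (E := E) (F := Ec)).mpr
    ⟨ReflTransGen.mono (fun _ _ h => by simpa [liftCut] using h) _ _ hs,
      ReflTransGen.mono (fun _ _ h => by simpa [liftCut] using h) _ _ ht⟩
  rcases h p with ⟨e, he, hl⟩ | hproc
  · exact hp e hl he
  · exact hw (by simp [liftCut, ← hpw, hproc])

theorem liftCut_subset_layerEdges (hEc : Ec ⊆ E) : liftCut Ec Vc ⊆ layerEdges E := by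
  intro q hq
  simp only [liftCut, mem_union, mem_image] at hq
  rcases hq with (⟨e, he, rfl⟩ | ⟨e, he, rfl⟩) | ⟨w, -, rfl⟩
  · simpa [Prod.map] using hEc he
  · simpa [Prod.map] using hEc he
  · simp

omit [Fintype V] in
theorem sum_lcost_liftCut (κ : V → ℝ) :
    ∑ q ∈ liftCut Ec Vc, lcost μE κ q = 2 * ∑ e ∈ Ec, μE e + ∑ w ∈ Vc, κ w := by
  rw [liftCut, sum_union, sum_union, sum_image, sum_image, sum_image]
  · simp [lcost, Prod.map, two_mul]
  · exact fun a _ b _ h => Sum.inl_injective (congrArg Prod.fst h)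
  · exact (Sum.inr_injective.prodMap Sum.inr_injective).injOn
  · exact (Sum.inl_injective.prodMap Sum.inl_injective).injOn
  · exact disjoint_left.mpr (by simp)
  · exact disjoint_left.mpr (by simp)

omit [Fintype V] in
theorem lcost_nonneg (hμE : ∀ e, 0 ≤ μE e) (hμV : ∀ w, 0 ≤ μV w) (q : (V ⊕ V) × (V ⊕ V)) :
    0 ≤ lcost μE μV q := by
  rcases q with ⟨u | u, v | v⟩ <;> simp only [lcost]
  · exact hμE _
  · split_ifs <;> simp [hμV]
  · exact le_rfl
  · exact hμE _

theorem jointCutValue_layerCut_le (hμE : ∀ e, 0 ≤ μE e) (hμV : ∀ w, 0 ≤ μV w) :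
    jointCutValue μE μV (layerCutLinks E C) (layerCutNodes C) ≤ ∑ q ∈ C, lcost μE μV q := by
  -- charge each link of the projected cut to one of its copies in `C`
  let g : V × V ⊕ V → (V ⊕ V) × (V ⊕ V) :=
    Sum.elim
      (fun e => if (.inl e.1, .inl e.2) ∈ C then (.inl e.1, .inl e.2) else (.inr e.1, .inr e.2))
      fun w => (.inl w, .inr w)
  have hg : g.Injective := by
    rintro (⟨a, b⟩ | a) (⟨c, d⟩ | c) h <;> simp only [g, Sum.elim_inl, Sum.elim_inr] at h <;> grind
  have hgC : ∀ x ∈ (layerCutLinks E C).disjSum (layerCutNodes C), g x ∈ C := by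
    rintro (e | w) hx <;>
      simp only [layerCutLinks, layerCutNodes, inl_mem_disjSum, inr_mem_disjSum, mem_filter] at hx
    · simp only [g, Sum.elim_inl]; split_ifs with h
      · exact h
      · exact hx.2.resolve_left h
    · exact hx.2
  calc jointCutValue μE μV (layerCutLinks E C) (layerCutNodes C)
      = ∑ x ∈ (layerCutLinks E C).disjSum (layerCutNodes C), lcost μE μV (g x) := by
        rw [jointCutValue, sum_disjSum]
        congr 1 <;> refine sum_congr rfl fun x _ => ?_
        · simp only [g, Sum.elim_inl]; split_ifs <;> rfl
        · simp [g, lcost]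
    _ = ∑ q ∈ ((layerCutLinks E C).disjSum (layerCutNodes C)).image g, lcost μE μV q :=
        (sum_image hg.injOn).symm
    _ ≤ ∑ q ∈ C, lcost μE μV q :=
        sum_le_sum_of_subset_of_nonneg (by simpa [image_subset_iff] using hgC)
          fun q _ _ => lcost_nonneg hμE hμV q

theorem IsJointCut.links_or_proc_mem_union (hμV : ∀ w, 0 ≤ μV w)
    (h : IsJointCut E μV s t Ec Vc) (p : CompPath E s t) :
    (∃ e ∈ Ec, e ∈ p.links) ∨ p.proc ∈ Vc ∪ univ.filter fun w => μV w = 0 := by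
  rcases (hμV p.proc).lt_or_eq with hpos | hzero
  · exact (h.2 p hpos).imp_right fun hp => mem_union_left _ hp
  · exact .inr (mem_union_right _ (by simp [hzero]))

omit [DecidableEq V] in
theorem le_mul_minJointCutValue {a c : ℝ} (hc : 0 < c)
    (h : ∀ Ec Vc, IsJointCut E μV s t Ec Vc → a ≤ c * jointCutValue μE μV Ec Vc) :
    a ≤ c * minJointCutValue E μE μV s t := by
  rw [← div_le_iff₀' hc]
  exact le_csInf ⟨_, E, univ, ⟨subset_rfl, fun _ _ => .inr (mem_univ _)⟩, rfl⟩
    (by rintro _ ⟨Ec, Vc, hcut, rfl⟩; exact (div_le_iff₀' hc).mpr (h Ec Vc hcut))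

end Cuts

theorem approx_joint_cut_general (E : Finset (V × V)) (μE : V × V → ℝ) (μV : V → ℝ)
    (hμE : ∀ e, 0 ≤ μE e) (hμV : ∀ w, 0 ≤ μV w) (s t : V)
    (C : Finset ((V ⊕ V) × (V ⊕ V)))
    (hCdisc : ¬ LConnected E C (Sum.inl s) (Sum.inr t))
    (hCmin : ∀ C' ⊆ layerEdges E, ¬ LConnected E C' (Sum.inl s) (Sum.inr t) →
      ∑ q ∈ C, lcost μE μV q ≤ ∑ q ∈ C', lcost μE μV q) :
    IsJointCut E μV s t
        (E.filter fun e => (Sum.inl e.1, Sum.inl e.2) ∈ C ∨ (Sum.inr e.1, Sum.inr e.2) ∈ C)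
        (univ.filter fun w => (Sum.inl w, Sum.inr w) ∈ C) ∧
      jointCutValue μE μV
          (E.filter fun e => (Sum.inl e.1, Sum.inl e.2) ∈ C ∨ (Sum.inr e.1, Sum.inr e.2) ∈ C)
          (univ.filter fun w => (Sum.inl w, Sum.inr w) ∈ C) ≤
        2 * minJointCutValue E μE μV s t := by
  refine ⟨isJointCut_layerCut hCdisc, le_mul_minJointCutValue two_pos fun Ec Vc hcut => ?_⟩
  let Vc' := Vc ∪ univ.filter fun w => μV w = 0
  calc _ ≤ ∑ q ∈ C, lcost μE μV q := jointCutValue_layerCut_le hμE hμV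
    _ ≤ ∑ q ∈ liftCut Ec Vc', lcost μE μV q :=
        hCmin _ (liftCut_subset_layerEdges hcut.1)
          (not_lConnected_liftCut (hcut.links_or_proc_mem_union hμV))
    _ = 2 * ∑ e ∈ Ec, μE e + ∑ w ∈ Vc, μV w := by
        rw [sum_lcost_liftCut, sum_union_eq_left (by simp +contextual)]
    _ ≤ 2 * jointCutValue μE μV Ec Vc := by
        rw [jointCutValue]
        linarith [sum_nonneg fun w (_ : w ∈ Vc) => hμV w]

/-- In the layered graph give each copy of a link `(u,v)` cost
`μE (u,v)` and each crossing edge `(w,w')` cost `μV w`. If `C` is a minimum-cost set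
of layered edges disconnecting `s` from `t'`, then
`(E_c, V_c) = ({(u,v) ∈ E : (u,v) ∈ C or (u',v') ∈ C}, {w : (w,w') ∈ C})` is a joint
communication and computation cut for `(s, t)` of value at most twice the minimum
joint cut value. -/
theorem approx_joint_cut (E : Finset (V × V)) (μE : V × V → ℝ) (μV : V → ℝ)
    (hμE : ∀ e, 0 ≤ μE e) (hμV : ∀ w, 0 ≤ μV w) (s t : V)
    (C : Finset ((V ⊕ V) × (V ⊕ V))) (hCsub : C ⊆ layerEdges E)
    (hCdisc : ¬ LConnected E C (Sum.inl s) (Sum.inr t))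
    (hCmin : ∀ C' ⊆ layerEdges E, ¬ LConnected E C' (Sum.inl s) (Sum.inr t) →
      ∑ q ∈ C, lcost μE μV q ≤ ∑ q ∈ C', lcost μE μV q) :
    IsJointCut E μV s t
        (E.filter fun e => (Sum.inl e.1, Sum.inl e.2) ∈ C ∨ (Sum.inr e.1, Sum.inr e.2) ∈ C)
        (univ.filter fun w => (Sum.inl w, Sum.inr w) ∈ C) ∧
      jointCutValue μE μV
          (E.filter fun e => (Sum.inl e.1, Sum.inl e.2) ∈ C ∨ (Sum.inr e.1, Sum.inr e.2) ∈ C)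
          (univ.filter fun w => (Sum.inl w, Sum.inr w) ∈ C) ≤
        2 * minJointCutValue E μE μV s t :=
  approx_joint_cut_general E μE μV hμE hμV s t C hCdisc hCmin
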